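/- Let X = (X_1,…,X_n) be self-adjoint elements of a tracial W*-probability space (M,τ), and for each j define Δ_j := ((τ ∘ ev_X) ⊗ id) ∘ ∂_j on ℂ⟨Z_1,…,Z_n⟩. If P has total degree d ≥ 1 and a_{i_1,…,i_d} Z_{i_1}⋯Z_{i_d} is a highest-degree monomial of P, then Δ_{i_d} ⋯ Δ_{i_1} P = a_{i_1,…,i_d} (a constant polynomial). -/

import Mathlib

open scoped TensorProduct InnerProductSpace

/-- `D` is the `j`-th noncommutative derivative on `ℂ⟨Z_1,…,Z_n⟩`. -/
def IsNCDerivative (n : ℕ) (j : Fin n)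
    (D : FreeAlgebra ℂ (Fin n) →ₗ[ℂ] FreeAlgebra ℂ (Fin n) ⊗[ℂ] FreeAlgebra ℂ (Fin n)) :
    Prop :=
  (∀ a b : FreeAlgebra ℂ (Fin n),
      D (a * b) = D a * (1 ⊗ₜ[ℂ] b) + (a ⊗ₜ[ℂ] 1) * D b) ∧
  (∀ i : Fin n,
      D (FreeAlgebra.ι ℂ i) = if i = j then (1 ⊗ₜ[ℂ] 1) else 0)

variable {H : Type*} [NormedAddCommGroup H] [InnerProductSpace ℂ H] [CompleteSpace H]

/-- `Δ_j := ((τ ∘ ev_X) ⊗ id) ∘ ∂_j : ℂ⟨Z_1,…,Z_n⟩ → ℂ⟨Z_1,…,Z_n⟩`,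
i.e. `τ ∘ ev_X` is applied to the left tensor leg of `∂_j P`. -/
noncomputable def Delta (n : ℕ) (τ : (H →L[ℂ] H) →ₗ[ℂ] ℂ) (X : Fin n → (H →L[ℂ] H))
    (D : ∀ _ : Fin n,
      FreeAlgebra ℂ (Fin n) →ₗ[ℂ] FreeAlgebra ℂ (Fin n) ⊗[ℂ] FreeAlgebra ℂ (Fin n))
    (j : Fin n) : FreeAlgebra ℂ (Fin n) →ₗ[ℂ] FreeAlgebra ℂ (Fin n) :=
  (TensorProduct.lid ℂ (FreeAlgebra ℂ (Fin n))).toLinearMap ∘ₗ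
    (TensorProduct.map (τ ∘ₗ (FreeAlgebra.lift ℂ X).toLinearMap) LinearMap.id) ∘ₗ D j

/-!
Write `Δ^φ_j := (φ ⊗ id) ∘ ∂_j` (`sliceLeft φ (D j)`) for a linear functional `φ` on `ℂ⟨Z⟩`, so that
`Δ_j = Δ^{τ ∘ ev_X}_j`. The Leibniz rule gives
`Δ^φ_j (Z_i Q) = [i = j] φ(1) Q + Δ^{φ(Z_i ·)}_j Q`, so on a word `Z_{u_1} ⋯ Z_{u_k}` the map
`Δ^φ_j` only produces words of length `< k`, and the only one of length `k - 1` is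
`Z_{u_2} ⋯ Z_{u_k}`, with coefficient `φ(1)` when `u_1 = j`. Hence on polynomials of degree
`≤ k + 1`, `Δ^φ_j` lands in degree `≤ k` and the coefficient of `v` in `Δ^φ_j P` is `φ(1)` times
the coefficient of `j v` in `P`. Iterating along `w` on a polynomial of degree `≤ |w|` leaves the
constant `φ(1)^{|w|} a_w = a_w`.
-/

namespace FreeAlgebra

variable {R X : Type*} [CommSemiring R]

theorem basisFreeMonoid_apply (x : FreeMonoid X) :
    basisFreeMonoid R X x = FreeMonoid.lift (ι R) x := by
  simp [basisFreeMonoid, equivMonoidAlgebraFreeMonoid]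

theorem basisFreeMonoid_one : basisFreeMonoid R X 1 = 1 := by
  rw [basisFreeMonoid_apply, map_one]

theorem basisFreeMonoid_of_mul (i : X) (x : FreeMonoid X) :
    basisFreeMonoid R X (FreeMonoid.of i * x) = ι R i * basisFreeMonoid R X x := by
  rw [basisFreeMonoid_apply, basisFreeMonoid_apply, map_mul, FreeMonoid.lift_eval_of]

variable (R X) in
noncomputable def degreeLE (k : ℕ) : Submodule R (FreeAlgebra R X) :=
  Submodule.span R (basisFreeMonoid R X '' {x | x.length ≤ k})

theorem mem_degreeLE_iff {k : ℕ} {P : FreeAlgebra R X} :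
    P ∈ degreeLE R X k ↔ ∀ x ∈ ((basisFreeMonoid R X).repr P).support, x.length ≤ k :=
  (basisFreeMonoid R X).mem_span_image

theorem degreeLE_mono {k l : ℕ} (hkl : k ≤ l) : degreeLE R X k ≤ degreeLE R X l :=
  Submodule.span_mono (Set.image_mono fun _ hx => le_trans hx hkl)

theorem eq_algebraMap_of_mem_degreeLE_zero {P : FreeAlgebra R X} (hP : P ∈ degreeLE R X 0) :
    P = algebraMap R _ ((basisFreeMonoid R X).repr P 1) := by
  let constTerm : FreeAlgebra R X →ₗ[R] FreeAlgebra R X :=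
    Algebra.linearMap R _ ∘ₗ (basisFreeMonoid R X).coord 1
  refine LinearMap.eqOn_span' (f := LinearMap.id) (g := constTerm) ?_ hP
  rintro _ ⟨x, hx, rfl⟩
  obtain rfl : x = 1 := FreeMonoid.length_eq_zero.mp (Nat.le_zero.mp hx)
  change basisFreeMonoid R X 1 =
    algebraMap R _ ((basisFreeMonoid R X).repr (basisFreeMonoid R X 1) 1)
  rw [Module.Basis.repr_self, Finsupp.single_eq_same, basisFreeMonoid_one, map_one]

end FreeAlgebra

open FreeAlgebra

section

variable {n : ℕ}

noncomputable def sliceLeft (φ : FreeAlgebra ℂ (Fin n) →ₗ[ℂ] ℂ)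
    (δ : FreeAlgebra ℂ (Fin n) →ₗ[ℂ] FreeAlgebra ℂ (Fin n) ⊗[ℂ] FreeAlgebra ℂ (Fin n)) :
    FreeAlgebra ℂ (Fin n) →ₗ[ℂ] FreeAlgebra ℂ (Fin n) :=
  (TensorProduct.lid ℂ _).toLinearMap ∘ₗ TensorProduct.map φ LinearMap.id ∘ₗ δ

namespace IsNCDerivative

variable {j : Fin n}
  {δ : FreeAlgebra ℂ (Fin n) →ₗ[ℂ] FreeAlgebra ℂ (Fin n) ⊗[ℂ] FreeAlgebra ℂ (Fin n)}

theorem map_one (hδ : IsNCDerivative n j δ) : δ 1 = 0 := by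
  have h := hδ.1 1 1
  rw [mul_one, ← Algebra.TensorProduct.one_def, mul_one, one_mul] at h
  exact left_eq_add.mp h

theorem sliceLeft_one (hδ : IsNCDerivative n j δ) (φ : FreeAlgebra ℂ (Fin n) →ₗ[ℂ] ℂ) :
    sliceLeft φ δ 1 = 0 := by
  simp [sliceLeft, hδ.map_one]

theorem sliceLeft_ι_mul (hδ : IsNCDerivative n j δ) (φ : FreeAlgebra ℂ (Fin n) →ₗ[ℂ] ℂ)
    (i : Fin n) (Q : FreeAlgebra ℂ (Fin n)) :
    sliceLeft φ δ (ι ℂ i * Q) =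
      (if i = j then φ 1 • Q else 0) + sliceLeft (φ ∘ₗ LinearMap.mulLeft ℂ (ι ℂ i)) δ Q := by
  simp only [sliceLeft, LinearMap.coe_comp, Function.comp_apply, LinearEquiv.coe_coe]
  rw [hδ.1, hδ.2, map_add, map_add]
  congr 1
  · split_ifs <;> simp
  · induction δ Q using TensorProduct.induction_on with
    | zero => simp
    | tmul a b => simp
    | add s t hs ht => rw [mul_add, map_add, map_add, hs, ht, map_add, map_add]

theorem repr_sliceLeft_basisFreeMonoid (hδ : IsNCDerivative n j δ) {u v : List (Fin n)}
    (huv : u.length ≤ v.length + 1) (φ : FreeAlgebra ℂ (Fin n) →ₗ[ℂ] ℂ) :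
    (basisFreeMonoid ℂ (Fin n)).repr
        (sliceLeft φ δ (basisFreeMonoid ℂ (Fin n) (FreeMonoid.ofList u))) (FreeMonoid.ofList v) =
      if u = j :: v then φ 1 else 0 := by
  classical
  induction u generalizing φ with
  | nil => simp [basisFreeMonoid_one, hδ.sliceLeft_one]
  | cons i u ih =>
    rw [List.length_cons] at huv
    have hu : u ≠ j :: v := by rintro rfl; simp at huv
    rw [FreeMonoid.ofList_cons, basisFreeMonoid_of_mul, hδ.sliceLeft_ι_mul, map_add,
      Finsupp.add_apply, ih (by omega), if_neg hu, add_zero]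
    by_cases hij : i = j
    · subst hij
      simp [Finsupp.single_apply]
    · simp [hij]

theorem repr_sliceLeft_of_mem_degreeLE (hδ : IsNCDerivative n j δ)
    (φ : FreeAlgebra ℂ (Fin n) →ₗ[ℂ] ℂ) (x : FreeMonoid (Fin n)) {Q : FreeAlgebra ℂ (Fin n)}
    (hQ : Q ∈ degreeLE ℂ (Fin n) (x.length + 1)) :
    (basisFreeMonoid ℂ (Fin n)).repr (sliceLeft φ δ Q) x =
      φ 1 * (basisFreeMonoid ℂ (Fin n)).repr Q (.of j * x) := by
  classical
  refine LinearMap.eqOn_span' (f := (basisFreeMonoid ℂ (Fin n)).coord x ∘ₗ sliceLeft φ δ)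
    (g := φ 1 • (basisFreeMonoid ℂ (Fin n)).coord (.of j * x)) ?_ hQ
  rintro _ ⟨y, hy, rfl⟩
  obtain ⟨u, rfl⟩ := FreeMonoid.ofList.surjective y
  obtain ⟨v, rfl⟩ := FreeMonoid.ofList.surjective x
  rw [LinearMap.comp_apply, Module.Basis.coord_apply,
    hδ.repr_sliceLeft_basisFreeMonoid (u := u) (v := v) hy, ← FreeMonoid.ofList_cons]
  simp [Finsupp.single_apply, -FreeMonoid.ofList_cons]

theorem sliceLeft_mem_degreeLE (hδ : IsNCDerivative n j δ) (φ : FreeAlgebra ℂ (Fin n) →ₗ[ℂ] ℂ)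
    {k : ℕ} {Q : FreeAlgebra ℂ (Fin n)} (hQ : Q ∈ degreeLE ℂ (Fin n) (k + 1)) :
    sliceLeft φ δ Q ∈ degreeLE ℂ (Fin n) k := by
  refine mem_degreeLE_iff.mpr fun x hx => ?_
  by_contra! hk
  have hQx : (basisFreeMonoid ℂ (Fin n)).repr Q (.of j * x) = 0 :=
    Finsupp.notMem_support_iff.mp fun h => by
      have := mem_degreeLE_iff.mp hQ _ h
      rw [FreeMonoid.length_mul, FreeMonoid.length_of] at this
      omega
  apply Finsupp.mem_support_iff.mp hx
  rw [hδ.repr_sliceLeft_of_mem_degreeLE φ x (degreeLE_mono (by omega) hQ), hQx, mul_zero]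

end IsNCDerivative

theorem foldl_sliceLeft_eq_algebraMap {φ : FreeAlgebra ℂ (Fin n) →ₗ[ℂ] ℂ} (hφ : φ 1 = 1)
    {δ : Fin n → FreeAlgebra ℂ (Fin n) →ₗ[ℂ] FreeAlgebra ℂ (Fin n) ⊗[ℂ] FreeAlgebra ℂ (Fin n)}
    (hδ : ∀ j, IsNCDerivative n j (δ j)) (v : List (Fin n)) {Q : FreeAlgebra ℂ (Fin n)}
    (hQ : Q ∈ degreeLE ℂ (Fin n) v.length) :
    v.foldl (fun Q j => sliceLeft φ (δ j) Q) Q =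
      algebraMap ℂ _ ((basisFreeMonoid ℂ (Fin n)).repr Q (FreeMonoid.ofList v)) := by
  induction v generalizing Q with
  | nil => exact eq_algebraMap_of_mem_degreeLE_zero hQ
  | cons j v ih =>
    rw [List.foldl_cons, ih ((hδ j).sliceLeft_mem_degreeLE φ hQ),
      (hδ j).repr_sliceLeft_of_mem_degreeLE φ (.ofList v) hQ, hφ, one_mul, FreeMonoid.ofList_cons]

end

theorem stmt6_general (n : ℕ) (τ : (H →L[ℂ] H) →ₗ[ℂ] ℂ) (hone : τ 1 = 1)
    (X : Fin n → (H →L[ℂ] H))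
    (D : ∀ _ : Fin n,
      FreeAlgebra ℂ (Fin n) →ₗ[ℂ] FreeAlgebra ℂ (Fin n) ⊗[ℂ] FreeAlgebra ℂ (Fin n))
    (hD : ∀ j, IsNCDerivative n j (D j))
    (P : FreeAlgebra ℂ (Fin n)) (d : ℕ)
    (hdeg : ∀ u ∈ (FreeAlgebra.equivMonoidAlgebraFreeMonoid P).coeff.support,
      (FreeMonoid.toList u).length ≤ d)
    (w : List (Fin n)) (hw : w.length = d) :
    w.foldl (fun Q j => Delta n τ X D j Q) P =
      algebraMap ℂ (FreeAlgebra ℂ (Fin n))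
        ((FreeAlgebra.equivMonoidAlgebraFreeMonoid P).coeff (FreeMonoid.ofList w)) := by
  have hΔ : ∀ j, Delta n τ X D j = sliceLeft (τ ∘ₗ (FreeAlgebra.lift ℂ X).toLinearMap) (D j) :=
    fun _ => rfl
  simp only [hΔ]
  exact foldl_sliceLeft_eq_algebraMap (by simp [hone]) hD w (mem_degreeLE_iff.mpr (hw ▸ hdeg))

/-- if `P` has total degree `d ≥ 1` (every word in the support of `P`
has length `≤ d`) and `a · Z_{i_1} ⋯ Z_{i_d}` is a highest-degree monomial of `P`
(encoded by the word `w = [i_1, …, i_d]`, with coefficient `a ≠ 0`), then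
`Δ_{i_d} ⋯ Δ_{i_1} P = a` as a constant polynomial, where
`Δ_j = ((τ ∘ ev_X) ⊗ id) ∘ ∂_j` and `τ(1) = 1`. -/
theorem stmt6 (n : ℕ) (τ : (H →L[ℂ] H) →ₗ[ℂ] ℂ) (hone : τ 1 = 1)
    (X : Fin n → (H →L[ℂ] H))
    (D : ∀ _ : Fin n,
      FreeAlgebra ℂ (Fin n) →ₗ[ℂ] FreeAlgebra ℂ (Fin n) ⊗[ℂ] FreeAlgebra ℂ (Fin n))
    (hD : ∀ j, IsNCDerivative n j (D j))
    (P : FreeAlgebra ℂ (Fin n)) (d : ℕ) (hd : 1 ≤ d)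
    (hdeg : ∀ u ∈ (FreeAlgebra.equivMonoidAlgebraFreeMonoid P).coeff.support,
      (FreeMonoid.toList u).length ≤ d)
    (w : List (Fin n)) (hw : w.length = d)
    (ha : (FreeAlgebra.equivMonoidAlgebraFreeMonoid P).coeff (FreeMonoid.ofList w) ≠ 0) :
    w.foldl (fun Q j => Delta n τ X D j Q) P =
      algebraMap ℂ (FreeAlgebra ℂ (Fin n))
        ((FreeAlgebra.equivMonoidAlgebraFreeMonoid P).coeff (FreeMonoid.ofList w)) :=
  stmt6_general n τ hone X D hD P d hdeg w hw
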